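/- Let B be a unital complex *-algebra, β an exponential one-parameter group on B, π : B → B a linear map, and c a nonzero purely imaginary complex number. If π ∘ β_c = β_c ∘ π, then π ∘ β_z = β_z ∘ π for all z ∈ ℂ; and if π ∘ β_c = β_{−c} ∘ π, then π ∘ β_z = β_{−z} ∘ π for all z ∈ ℂ. -/

import Mathlib

/-- A function `f : ℂ → ℂ` is of exponential type: it is entire and satisfies a bound
`|f z| ≤ M * exp (r * |Im z|)`. -/
def ExpType (f : ℂ → ℂ) : Prop :=
  Differentiable ℂ f ∧
    ∃ M r : ℝ, 0 < M ∧ 0 < r ∧ ∀ z : ℂ, ‖f z‖ ≤ M * Real.exp (r * |z.im|)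

/-- A function from `ℂ` into a complex vector space `V` is of finite exponential type if it is a
finite linear combination of functions of exponential type with coefficients in `V`. -/
def FinExpType {V : Type*} [AddCommGroup V] [Module ℂ V] (f : ℂ → V) : Prop :=
  ∃ (n : ℕ) (v : Fin n → V) (g : Fin n → ℂ → ℂ),
    (∀ j, ExpType (g j)) ∧ ∀ z : ℂ, f z = ∑ j, g j z • v j

/-- A one-parameter group on a unital complex *-algebra `B`: a family of algebra automorphisms
`β z` with `β (y + z) = β y ∘ β z` and `star (β z b) = β (conj z) (star b)`. -/
def IsOneParamGroup {B : Type*} [Ring B] [Algebra ℂ B] [StarRing B] [StarModule ℂ B]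
    (β : ℂ → (B ≃ₐ[ℂ] B)) : Prop :=
  (∀ y z : ℂ, ∀ b : B, β (y + z) b = β y (β z b)) ∧
    (∀ z : ℂ, ∀ b : B, star (β z b) = β (starRingEnd ℂ z) (star b))

/-- An exponential one-parameter group: a one-parameter group such that `z ↦ β z b` is of finite
exponential type for every `b`. -/
def IsExpOneParamGroup {B : Type*} [Ring B] [Algebra ℂ B] [StarRing B] [StarModule ℂ B]
    (β : ℂ → (B ≃ₐ[ℂ] B)) : Prop :=
  IsOneParamGroup β ∧ ∀ b : B, FinExpType (fun z => β z b)

/-!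
Fix `b` and a real `s` with `π ∘ β_c = β_{s c} ∘ π`. By the group law, `f w = β_{-s w} (π (β_w b))`
is periodic with period `c`. For every linear functional `φ`, `φ ∘ f` is of exponential type, so,
being periodic in the non-real direction `c`, it is bounded by its values on the strip
`|Im w| ≤ |Im c|`, hence bounded and constant by Liouville. Thus `f z = f 0 = π b`, i.e.
`π ∘ β_z = β_{s z} ∘ π`; the theorem is the case `s = ±1`.
-/

open Function

namespace ExpType

lemma of_norm_le {f : ℂ → ℂ} (hf : Differentiable ℂ f) {M r : ℝ}
    (hbound : ∀ z, ‖f z‖ ≤ M * Real.exp (r * |z.im|)) : ExpType f := by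
  refine ⟨hf, max M 1, max r 1, by positivity, by positivity, fun z => (hbound z).trans ?_⟩
  gcongr
  · exact le_max_left _ _
  · exact le_max_left _ _

lemma const (a : ℂ) : ExpType fun _ => a :=
  of_norm_le (differentiable_const a) (M := ‖a‖) (r := 0) fun _ => by simp

lemma add {f g : ℂ → ℂ} (hf : ExpType f) (hg : ExpType g) : ExpType fun z => f z + g z := by
  obtain ⟨hfd, M₁, r₁, hM₁, hr₁, hf⟩ := hf
  obtain ⟨hgd, M₂, r₂, hM₂, hr₂, hg⟩ := hg
  refine of_norm_le (hfd.add hgd) (M := M₁ + M₂) (r := r₁ + r₂) fun z => ?_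
  have h₁ : Real.exp (r₁ * |z.im|) ≤ Real.exp ((r₁ + r₂) * |z.im|) := by gcongr; linarith
  have h₂ : Real.exp (r₂ * |z.im|) ≤ Real.exp ((r₁ + r₂) * |z.im|) := by gcongr; linarith
  calc ‖f z + g z‖ ≤ M₁ * Real.exp (r₁ * |z.im|) + M₂ * Real.exp (r₂ * |z.im|) :=
        (norm_add_le _ _).trans (add_le_add (hf z) (hg z))
    _ ≤ (M₁ + M₂) * Real.exp ((r₁ + r₂) * |z.im|) := by rw [add_mul]; gcongr

lemma mul {f g : ℂ → ℂ} (hf : ExpType f) (hg : ExpType g) : ExpType fun z => f z * g z := by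
  obtain ⟨hfd, M₁, r₁, hM₁, -, hf⟩ := hf
  obtain ⟨hgd, M₂, r₂, -, -, hg⟩ := hg
  refine of_norm_le (hfd.mul hgd) (M := M₁ * M₂) (r := r₁ + r₂) fun z => ?_
  calc ‖f z * g z‖ ≤ M₁ * Real.exp (r₁ * |z.im|) * (M₂ * Real.exp (r₂ * |z.im|)) := by
        rw [norm_mul]
        exact mul_le_mul (hf z) (hg z) (norm_nonneg _) ((norm_nonneg _).trans (hf z))
    _ = M₁ * M₂ * Real.exp ((r₁ + r₂) * |z.im|) := by rw [add_mul, Real.exp_add]; ring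

lemma sum {ι : Type*} (s : Finset ι) {f : ι → ℂ → ℂ} (hf : ∀ i ∈ s, ExpType (f i)) :
    ExpType fun z => ∑ i ∈ s, f i z := by
  classical
  induction s using Finset.induction_on with
  | empty => simpa using const 0
  | insert a s ha ih =>
    simp only [Finset.sum_insert ha]
    exact (hf a (s.mem_insert_self a)).add (ih fun i hi => hf i (Finset.mem_insert_of_mem hi))

lemma comp_ofReal_mul {f : ℂ → ℂ} (hf : ExpType f) (t : ℝ) : ExpType fun z => f (t * z) := by
  obtain ⟨hfd, M, r, -, -, hf⟩ := hf
  refine of_norm_le (hfd.comp (differentiable_id.const_mul _)) (M := M) (r := r * |t|)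
    fun z => ?_
  simpa [abs_mul, mul_assoc] using hf (t * z)

end ExpType

lemma FinExpType.expType_apply {V : Type*} [AddCommGroup V] [Module ℂ V] {f : ℂ → V}
    (hf : FinExpType f) (φ : Module.Dual ℂ V) : ExpType fun z => φ (f z) := by
  obtain ⟨n, v, g, hg, hrep⟩ := hf
  simp only [hrep, map_sum, map_smul, smul_eq_mul]
  exact ExpType.sum _ fun j _ => (hg j).mul (ExpType.const _)

lemma Function.Periodic.exists_abs_im_le_apply_eq {α : Type*} {f : ℂ → α} {c : ℂ}
    (hf : Periodic f c) (hc : c.im ≠ 0) (z : ℂ) : ∃ u : ℂ, |u.im| ≤ |c.im| ∧ f u = f z := by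
  set n : ℤ := ⌊z.im / c.im⌋
  refine ⟨z - n * c, ?_, hf.sub_int_mul_eq n⟩
  have him : (z - n * c).im = c.im * Int.fract (z.im / c.im) := by
    rw [← Int.self_sub_floor, mul_sub, mul_div_cancel₀ _ hc]
    simp [n, mul_comm]
  rw [him, abs_mul, Int.abs_fract]
  exact mul_le_of_le_one_right (abs_nonneg _) (Int.fract_lt_one _).le

lemma ExpType.apply_eq_of_periodic {f : ℂ → ℂ} (hf : ExpType f) {c : ℂ} (hper : Periodic f c)
    (hc : c.im ≠ 0) (z w : ℂ) : f z = f w := by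
  obtain ⟨hfd, M, r, hM, hr, hbound⟩ := hf
  refine hfd.apply_eq_apply_of_bounded ?_ z w
  refine isBounded_iff_forall_norm_le.2 ⟨M * Real.exp (r * |c.im|), ?_⟩
  rintro _ ⟨x, rfl⟩
  obtain ⟨u, hu, hfu⟩ := hper.exists_abs_im_le_apply_eq hc x
  rw [← hfu]
  exact (hbound u).trans (mul_le_mul_of_nonneg_left (by gcongr) hM.le)

lemma apply_eq_of_periodic_of_forall_expType_dual {V : Type*} [AddCommGroup V] [Module ℂ V]
    {f : ℂ → V} (hf : ∀ φ : Module.Dual ℂ V, ExpType fun z => φ (f z)) {c : ℂ}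
    (hper : Periodic f c) (hc : c.im ≠ 0) (z w : ℂ) : f z = f w := by
  rw [← sub_eq_zero, ← Module.forall_dual_apply_eq_zero_iff ℂ]
  intro φ
  rw [map_sub, sub_eq_zero]
  exact (hf φ).apply_eq_of_periodic (hper.comp φ) hc z w

section OneParamGroup

variable {B : Type*} [Ring B] [Algebra ℂ B] {β : ℂ → (B ≃ₐ[ℂ] B)}

lemma expType_dual_apply_conj (hexp : ∀ b, FinExpType fun z => β z b) (π : B →ₗ[ℂ] B) (t : ℝ)
    (b : B) (φ : Module.Dual ℂ B) : ExpType fun w => φ (β (t * w) (π (β w b))) := by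
  obtain ⟨n, v, g, hg, hrep⟩ := hexp b
  simp only [hrep, map_sum, map_smul, smul_eq_mul]
  exact ExpType.sum _ fun j _ => (hg j).mul (((hexp (π (v j))).expType_apply φ).comp_ofReal_mul t)

variable (hadd : ∀ y z b, β (y + z) b = β y (β z b))
include hadd

lemma apply_zero_of_add (b : B) : β 0 b = b :=
  (β 0).injective (by rw [← hadd, add_zero])

lemma map_apply_eq_of_map_apply_eq_at (hexp : ∀ b, FinExpType fun z => β z b) (π : B →ₗ[ℂ] B)
    {c : ℂ} (hc : c.im ≠ 0) (s : ℝ) (hπ : ∀ b, π (β c b) = β (s * c) (π b)) (z : ℂ) (b : B) :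
    π (β z b) = β (s * z) (π b) := by
  set f : ℂ → B := fun w => β (↑(-s) * w) (π (β w b))
  have hper : Periodic f c := fun w => by
    simp only [f]
    rw [add_comm w c, hadd c w, hπ, ← hadd]
    congr 2
    push_cast
    ring
  have hconst : f z = f 0 :=
    apply_eq_of_periodic_of_forall_expType_dual (expType_dual_apply_conj hexp π (-s) b) hper hc z 0
  simp only [f, mul_zero, apply_zero_of_add hadd] at hconst
  rw [← hconst, ← hadd]
  push_cast
  simp [apply_zero_of_add hadd]

end OneParamGroup

/-- Lemma A.2 of the paper: if a linear map `π` commutes (resp. anti-commutes in the parameter)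
with an exponential one-parameter group `β` at a nonzero purely imaginary `c`, then it does so
at every `z ∈ ℂ`. -/
theorem linear_map_commutes_of_commutes_at_imaginary
    {B : Type*} [Ring B] [Algebra ℂ B] [StarRing B] [StarModule ℂ B]
    (β : ℂ → (B ≃ₐ[ℂ] B)) (hβ : IsExpOneParamGroup β)
    (π : B →ₗ[ℂ] B)
    (c : ℂ) (hc : c ≠ 0) (hcim : c.re = 0) :
    ((∀ b : B, π (β c b) = β c (π b)) → ∀ z : ℂ, ∀ b : B, π (β z b) = β z (π b)) ∧
    ((∀ b : B, π (β c b) = β (-c) (π b)) → ∀ z : ℂ, ∀ b : B, π (β z b) = β (-z) (π b)) := by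
  obtain ⟨⟨hadd, -⟩, hexp⟩ := hβ
  have hc_im : c.im ≠ 0 := fun h => hc (Complex.ext hcim h)
  constructor
  · intro hπ z b
    simpa using map_apply_eq_of_map_apply_eq_at hadd hexp π hc_im 1 (by simpa using hπ) z b
  · intro hπ z b
    simpa using map_apply_eq_of_map_apply_eq_at hadd hexp π hc_im (-1) (by simpa using hπ) z b
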